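/- Let M be a real subspace of a real alternative *-algebra A with ℝ ⊆ M ⊆ Q_A, equipped with a norm satisfying ‖x‖² = n(x) for x ∈ M, arising from an inner product ⟨·,·⟩ on A. Then for all x, y ∈ M one has ⟨x, y⟩ = t(x y^c)/2, and consequently (t(x y^c))² ≤ 4 n(x) n(y), with equality if and only if x y^c is real. -/

import Mathlib

/-!
Polarizing `n(x) = ‖x‖²` along `x + y` gives `t(x yᶜ) = 2⟨x, y⟩` on `M`; the inequality is then
Cauchy–Schwarz for `⟨·,·⟩`, whose equality case is linear dependence of `x` and `y`. If
`x = c y` then `x yᶜ = c n(y)` is real. Conversely, since `1 ∈ M` the trace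
`t(y) = 2⟨y, 1⟩` is real, so `yᶜ = t(y) - y` commutes with `y` and right alternativity gives
`(x yᶜ) y = x (yᶜ y)`; hence `x yᶜ = r` yields `r y = n(y) x`, a linear relation.
-/

/-- The quadratic cone `Q_A`, in terms of the trace `t(x) = x + xᶜ` and norm `n(x) = x xᶜ`. -/
def quadCone (A : Type*) [NonAssocRing A] [Module ℝ A] [Star A] : Set A :=
  {x | (∃ r : ℝ, x = r • (1 : A)) ∨
    ∃ r s : ℝ, x + star x = r • (1 : A) ∧ x * star x = s • (1 : A) ∧ r ^ 2 < 4 * s}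

section

variable {A : Type*} [NonAssocRing A] [Module ℝ A] [StarRing A]
  {inn : A →ₗ[ℝ] A →ₗ[ℝ] ℝ} {M : Submodule ℝ A}

theorem mul_star_add_mul_star_eq_smul_one (hsymm : ∀ x y : A, inn x y = inn y x)
    (hnorm : ∀ x ∈ M, (inn x x) • (1 : A) = x * star x) {a b : A} (ha : a ∈ M) (hb : b ∈ M) :
    a * star b + b * star a = (2 * inn a b) • (1 : A) := by
  have hinn : inn (a + b) (a + b) = inn a a + inn b b + 2 * inn a b := by
    simp only [map_add, LinearMap.add_apply, hsymm b a]
    ring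
  have hmul : (a + b) * star (a + b) = a * star a + b * star b + (a * star b + b * star a) := by
    rw [star_add, add_mul, mul_add, mul_add]
    abel
  have hab := hnorm (a + b) (M.add_mem ha hb)
  rw [hinn, hmul, add_smul, add_smul, hnorm a ha, hnorm b hb] at hab
  exact (add_left_cancel hab).symm

theorem add_star_eq_smul_one_of_mem (hsymm : ∀ x y : A, inn x y = inn y x)
    (hnorm : ∀ x ∈ M, (inn x x) • (1 : A) = x * star x) (hone : (1 : A) ∈ M) {y : A}
    (hy : y ∈ M) : y + star y = (2 * inn y 1) • (1 : A) := by
  simpa using mul_star_add_mul_star_eq_smul_one hsymm hnorm hy hone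

variable [IsScalarTower ℝ A A] [SMulCommClass ℝ A A]

theorem star_mul_self_eq_mul_star_of_add_star_eq {y : A} {s : ℝ}
    (hs : y + star y = s • (1 : A)) : star y * y = y * star y := by
  rw [eq_sub_of_add_eq' hs, sub_mul, mul_sub, smul_mul_assoc, mul_smul_comm, one_mul, mul_one]

theorem mul_star_mul_eq_of_add_star_eq (hRA : ∀ x y : A, x * y * y = x * (y * y))
    (x : A) {y : A} {s : ℝ} (hs : y + star y = s • (1 : A)) :
    x * star y * y = x * (star y * y) := by
  simp only [eq_sub_of_add_eq' hs, mul_sub, sub_mul, mul_smul_comm, smul_mul_assoc, mul_one,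
    one_mul, hRA]

theorem smul_eq_smul_of_mul_star_eq_smul_one (hRA : ∀ x y : A, x * y * y = x * (y * y))
    (hsymm : ∀ x y : A, inn x y = inn y x)
    (hnorm : ∀ x ∈ M, (inn x x) • (1 : A) = x * star x) (hone : (1 : A) ∈ M) {x y : A}
    (hy : y ∈ M) {r : ℝ} (hr : x * star y = r • (1 : A)) : r • y = inn y y • x := by
  have ht := add_star_eq_smul_one_of_mem hsymm hnorm hone hy
  calc r • y = x * star y * y := by rw [hr, smul_mul_assoc, one_mul]
    _ = x * (y * star y) := by
      rw [mul_star_mul_eq_of_add_star_eq hRA x ht, star_mul_self_eq_mul_star_of_add_star_eq ht]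
    _ = inn y y • x := by rw [← hnorm y hy, mul_smul_comm, mul_one]

theorem exists_mul_star_eq_smul_one_iff_not_linearIndependent
    (hRA : ∀ x y : A, x * y * y = x * (y * y)) (hsymm : ∀ x y : A, inn x y = inn y x)
    (hdef : ∀ x : A, inn x x = 0 → x = 0)
    (hnorm : ∀ x ∈ M, (inn x x) • (1 : A) = x * star x) (hone : (1 : A) ∈ M) (x : A) {y : A}
    (hy : y ∈ M) :
    (∃ r : ℝ, x * star y = r • (1 : A)) ↔ ¬LinearIndependent ℝ ![x, y] := by
  rw [LinearIndependent.pair_iff]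
  push Not
  constructor
  · rintro ⟨r, hr⟩
    by_cases hy0 : y = 0
    · exact ⟨0, 1, by simp [hy0], by simp⟩
    refine ⟨-inn y y, r, ?_, fun h => absurd (hdef y (neg_eq_zero.mp h)) hy0⟩
    rw [smul_eq_smul_of_mul_star_eq_smul_one hRA hsymm hnorm hone hy hr, neg_smul, neg_add_cancel]
  · rintro ⟨s, t, hst, hne⟩
    by_cases hs : s = 0
    · have hy0 : y = 0 := by simpa [hs, hne hs] using hst
      exact ⟨0, by simp [hy0]⟩
    refine ⟨-(s⁻¹ * t * inn y y), ?_⟩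
    rw [(eq_inv_smul_iff₀ hs).mpr (eq_neg_of_add_eq_zero_left hst), smul_mul_assoc, neg_mul,
      smul_mul_assoc, ← hnorm y hy, smul_neg, smul_smul, smul_smul, mul_assoc, neg_smul]

end

theorem inner_eq_half_trace_and_cauchy_schwarz {A : Type*} [NonAssocRing A]
    [Module ℝ A] [IsScalarTower ℝ A A] [SMulCommClass ℝ A A]
    [StarRing A]
    (hRA : ∀ x y : A, x * y * y = x * (y * y))
    (inn : A →ₗ[ℝ] A →ₗ[ℝ] ℝ)
    (hsymm : ∀ x y : A, inn x y = inn y x)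
    (hpos : ∀ x : A, 0 ≤ inn x x)
    (hdef : ∀ x : A, inn x x = 0 → x = 0)
    (M : Submodule ℝ A) (hone : (1 : A) ∈ M)
    (hnorm : ∀ x ∈ M, (inn x x) • (1 : A) = x * star x) :
    ∀ x ∈ M, ∀ y ∈ M,
      (x * star y + star (x * star y) = (2 * inn x y) • (1 : A)) ∧
      (2 * inn x y) ^ 2 ≤ 4 * (inn x x * inn y y) ∧
      ((2 * inn x y) ^ 2 = 4 * (inn x x * inn y y) ↔
        ∃ r : ℝ, x * star y = r • (1 : A)) := by
  intro x hx y hy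
  have hB : inn.IsSymm := ⟨hsymm⟩
  have hposdef : ∀ z, z ≠ 0 → 0 < inn z z := fun z hz => (hpos z).lt_of_ne' (mt (hdef z) hz)
  have hcs := LinearMap.BilinForm.apply_sq_le_of_symm inn hpos hB x y
  refine ⟨by rw [star_mul, star_star]; exact mul_star_add_mul_star_eq_smul_one hsymm hnorm hx hy,
    by linarith, ?_⟩
  rw [exists_mul_star_eq_smul_one_iff_not_linearIndependent hRA hsymm hdef hnorm hone x hy,
    ← LinearMap.BilinForm.apply_sq_lt_iff_linearIndependent_of_symm inn hposdef hB, not_lt]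
  constructor <;> intro h <;> linarith
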